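/- arXiv:1505.01766 — 3 statements merged into one kernel-verified Lean document; each statement's English description precedes it below -/
import Mathlib

section
/- In the symmetric inverse monoid I(X), with E(F;v) = Id restricted to C(F;v) where C(F;v) = ∩_{f∈F} C(f,v), the product of two such idempotents satisfies: E(F;v)·E(G;w) = 0 unless v is a prefix of w or w is a prefix of v; and if w = vz then E(F;v)E(G;w) = E(G ∪ Fz; w), where Fz = {fz : f ∈ F}. -/
/-! Products of identities on subsets are identities on the intersection, so everything reduces
to intersecting `C(F;v)` with `C(G;w)`. A point of both has `v` and `w` as prefixes, which forces
them to be comparable; and if `w = vz`, a point `vzx` lies in `C(F;v)` iff `fzx ∈ X` for all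
`f ∈ F`, because `wcat v` is injective. -/

open Function

/-- The one-sided shift map on `ℕ → A`. -/
def shft {A : Type*} (x : ℕ → A) : ℕ → A := fun n => x (n + 1)

/-- Concatenation of a finite word `w` with an infinite word `x`. -/
def wcat {A : Type*} (w : List A) (x : ℕ → A) : ℕ → A :=
  fun n => w.getD n (x (n - w.length))

/-- Partial bijections on `ℕ → A` modelled as relations (sets of pairs (input, output)). -/
abbrev PB (A : Type*) := Set ((ℕ → A) × (ℕ → A))

/-- Composition on the largest possible domain: `rcomp r s` applies `s` first, then `r`
(i.e. the semigroup product `r · s`). -/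
def rcomp {A : Type*} (r s : PB A) : PB A := {p | ∃ y, (p.1, y) ∈ s ∧ (y, p.2) ∈ r}

/-- Inverse of a partial bijection. -/
def rinv {A : Type*} (r : PB A) : PB A := {p | (p.2, p.1) ∈ r}

/-- The identity map on a subset `U`. -/
def idOn {A : Type*} (U : Set (ℕ → A)) : PB A := {p | p.1 ∈ U ∧ p.2 = p.1}

/-- The partial bijection `s_μ : x ↦ μx` on `{x ∈ X : μx ∈ X}`. -/
def sMap {A : Type*} (X : Set (ℕ → A)) (μ : List A) : PB A :=
  {p | p.1 ∈ X ∧ wcat μ p.1 ∈ X ∧ p.2 = wcat μ p.1}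

/-- The cylinder set `C(v) = {vx : x ∈ A^ℕ} ∩ X`. -/
def Cyl {A : Type*} (X : Set (ℕ → A)) (v : List A) : Set (ℕ → A) :=
  {y | y ∈ X ∧ ∃ x, y = wcat v x}

/-- `C(μ,ν) = {νx ∈ X : μx ∈ X}`. -/
def Cmn {A : Type*} (X : Set (ℕ → A)) (μ ν : List A) : Set (ℕ → A) :=
  {y | ∃ x, y = wcat ν x ∧ y ∈ X ∧ wcat μ x ∈ X}

/-- `C(F;v) = {vx ∈ X : fx ∈ X for all f ∈ F}`. -/
def CFv {A : Type*} (X : Set (ℕ → A)) (F : Finset (List A)) (v : List A) : Set (ℕ → A) :=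
  {y | ∃ x, y = wcat v x ∧ y ∈ X ∧ ∀ f ∈ F, wcat f x ∈ X}

/-- The idempotent `E(F;v) = Id_{C(F;v)}`. -/
def Efv {A : Type*} (X : Set (ℕ → A)) (F : Finset (List A)) (v : List A) : PB A :=
  idOn (CFv X F v)

/-- The set `E_X = {E(F;v)} ∪ {0}` of idempotents. -/
def EXset {A : Type*} (X : Set (ℕ → A)) : Set (PB A) :=
  {r | r = ∅ ∨ ∃ (F : Finset (List A)) (v : List A), r = Efv X F v}

/-- The element `s_α E(F;v) s_β^*` of `I(X)`. -/
def elt {A : Type*} (X : Set (ℕ → A)) (α : List A) (F : Finset (List A)) (v β : List A) :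
    PB A :=
  rcomp (rcomp (sMap X α) (Efv X F v)) (rinv (sMap X β))

/-- The inverse semigroup `S_X = {s_α E(F;v) s_β^*} ∪ {0}` (closed form). -/
def SXset {A : Type*} (X : Set (ℕ → A)) : Set (PB A) :=
  {r | r = ∅ ∨ ∃ (α β v : List A) (F : Finset (List A)), r = elt X α F v β}

/-- `α` and `β` are in lowest terms: they do not both end with the same letter. -/
def LowTerms {A : Type*} (α β : List A) : Prop :=
  ∀ a : A, ¬(α.getLast? = some a ∧ β.getLast? = some a)

/-- A word viewed as an element of the free group on `A`. -/
def wgrp {A : Type*} (w : List A) : FreeGroup A := (w.map FreeGroup.of).prod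

/-- Natural partial order on partial bijections: `s ≤ t` iff `t s^* s = s`. -/
def rle {A : Type*} (s t : PB A) : Prop := rcomp t (rcomp (rinv s) s) = s

/-- `P_k(x) = {μ ∈ A^k : μx ∈ X}`. -/
def Pk {A : Type*} (X : Set (ℕ → A)) (k : ℕ) (x : ℕ → A) : Set (List A) :=
  {μ | μ.length = k ∧ wcat μ x ∈ X}

/-- `l`-past equivalence: `P_r(x) = P_r(y)` for all `r ≤ l`. -/
def pastEq {A : Type*} (X : Set (ℕ → A)) (l : ℕ) (x y : ℕ → A) : Prop :=
  ∀ r ≤ l, Pk X r x = Pk X r y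

/-- The relation `x ~_{(k,l)} y`. -/
def klEq {A : Type*} (X : Set (ℕ → A)) (k l : ℕ) (x y : ℕ → A) : Prop :=
  (∀ i < k, x i = y i) ∧ pastEq X l (shft^[k] x) (shft^[k] y)

section

variable {A : Type*}

lemma wcat_append (v z : List A) (x : ℕ → A) :
    wcat (v ++ z) x = wcat v (wcat z x) := by
  funext n
  simp only [wcat]
  rcases lt_or_ge n v.length with h | h
  · rw [List.getD_eq_getElem _ _ h, List.getD_eq_getElem _ _ (by simp; omega),
      List.getElem_append_left h]
  · rw [List.getD_eq_default _ _ h, List.getD_append_right _ _ _ _ h]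
    simp [Nat.sub_sub]

lemma wcat_injective (v : List A) : Injective (wcat v) := by
  intro x x' h
  funext n
  simpa [wcat] using congrFun h (n + v.length)

lemma prefix_of_wcat_eq {v w : List A} {x x' : ℕ → A}
    (h : wcat v x = wcat w x') (hl : v.length ≤ w.length) : v <+: w := by
  suffices v = w.take v.length from this ▸ List.take_prefix _ _
  refine List.ext_getElem (by simp [hl]) fun i hi _ => ?_
  have hc := congrFun h i
  simp only [wcat] at hc
  rw [List.getD_eq_getElem _ _ hi, List.getD_eq_getElem _ _ (by omega)] at hc
  simpa using hc

lemma prefix_or_prefix_of_wcat_eq {v w : List A} {x x' : ℕ → A}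
    (h : wcat v x = wcat w x') : v <+: w ∨ w <+: v := by
  rcases le_total v.length w.length with hl | hl
  · exact .inl (prefix_of_wcat_eq h hl)
  · exact .inr (prefix_of_wcat_eq h.symm hl)

lemma idOn_empty : idOn (∅ : Set (ℕ → A)) = ∅ := by
  ext p
  simp [idOn]

lemma rcomp_idOn_idOn (U V : Set (ℕ → A)) : rcomp (idOn U) (idOn V) = idOn (U ∩ V) := by
  ext ⟨x, y⟩
  simp only [rcomp, idOn, Set.mem_ofPred_eq, Set.mem_inter_iff]
  constructor
  · rintro ⟨_, ⟨hV, rfl⟩, hU, rfl⟩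
    exact ⟨⟨hU, hV⟩, rfl⟩
  · rintro ⟨⟨hU, hV⟩, rfl⟩
    exact ⟨_, ⟨hV, rfl⟩, hU, rfl⟩

lemma disjoint_CFv_of_not_prefix (X : Set (ℕ → A)) (F G : Finset (List A)) {v w : List A}
    (hvw : ¬(v <+: w ∨ w <+: v)) : Disjoint (CFv X F v) (CFv X G w) := by
  refine Set.disjoint_left.2 ?_
  rintro _ ⟨x, rfl, -, -⟩ ⟨x', hx', -, -⟩
  exact hvw (prefix_or_prefix_of_wcat_eq hx')

lemma CFv_inter_CFv_append [DecidableEq A] (X : Set (ℕ → A)) (F G : Finset (List A))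
    (v z : List A) :
    CFv X F v ∩ CFv X G (v ++ z) = CFv X (G ∪ F.image (· ++ z)) (v ++ z) := by
  ext y
  simp only [CFv, Set.mem_inter_iff, Set.mem_ofPred_eq, Finset.forall_mem_union,
    Finset.forall_mem_image, wcat_append]
  constructor
  · rintro ⟨⟨x', hx', -, hF⟩, x, rfl, hX, hG⟩
    obtain rfl := wcat_injective v hx'.symm
    exact ⟨x, rfl, hX, hG, hF⟩
  · rintro ⟨x, rfl, hX, hG, hF⟩
    exact ⟨⟨wcat z x, rfl, hX, hF⟩, x, rfl, hX, hG⟩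

end

theorem stmt2_general {A : Type*} [DecidableEq A]
    (X : Set (ℕ → A)) :
    (∀ (F G : Finset (List A)) (v w : List A), ¬(v <+: w ∨ w <+: v) →
        rcomp (Efv X F v) (Efv X G w) = (∅ : PB A)) ∧
    (∀ (F G : Finset (List A)) (v z : List A),
        rcomp (Efv X F v) (Efv X G (v ++ z)) =
          Efv X (G ∪ F.image (fun f => f ++ z)) (v ++ z)) := by
  refine ⟨fun F G v w hvw => ?_, fun F G v z => ?_⟩
  · rw [Efv, Efv, rcomp_idOn_idOn, (disjoint_CFv_of_not_prefix X F G hvw).inter_eq, idOn_empty]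
  · rw [Efv, Efv, Efv, rcomp_idOn_idOn, CFv_inter_CFv_append]

theorem stmt2 {A : Type*} [Fintype A] [DecidableEq A] [TopologicalSpace A] [DiscreteTopology A]
    (X : Set (ℕ → A)) (hXcl : IsClosed X) (hXsh : ∀ x ∈ X, shft x ∈ X) :
    (∀ (F G : Finset (List A)) (v w : List A), ¬(v <+: w ∨ w <+: v) →
        rcomp (Efv X F v) (Efv X G w) = (∅ : PB A)) ∧
    (∀ (F G : Finset (List A)) (v z : List A),
        rcomp (Efv X F v) (Efv X G (v ++ z)) =
          Efv X (G ∪ F.image (fun f => f ++ z)) (v ++ z)) :=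
  stmt2_general X
end

section
/- Let v ∈ A*, F ⊆ A* finite, k = |v| and l = max{|f|, |v| : f ∈ F}. Then for every x ∈ X and every (r,s) ∈ I with (k,l) ≤ (r,s) in the order (k₁,l₁) ≤ (k₂,l₂) iff k₁ ≤ k₂ and l₁−k₁ ≤ l₂−k₂, the equivalence class of x under ~_{(r,s)} is either contained in C(F;v) or disjoint from C(F;v). -/
open Function

lemma shft_iter {A : Type*} (x : ℕ → A) (n i : ℕ) : shft^[n] x i = x (i + n) := by
  induction n generalizing x i with
  | zero => rfl
  | succ n ih =>
    rw [Function.iterate_succ_apply, ih]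
    show x (i + n + 1) = x (i + (n + 1))
    rw [Nat.add_assoc]

lemma wcat_append_ev {A : Type*} (u w : List A) (x : ℕ → A) :
    wcat (u ++ w) x = wcat u (wcat w x) := by
  funext n
  unfold wcat
  rcases lt_or_ge n u.length with h | h
  · rw [List.getD_eq_getElem _ _ h, List.getD_eq_getElem _ _ (by simp; omega),
      List.getElem_append_left h]
  · rw [List.getD_eq_default _ _ h]
    rcases lt_or_ge n (u.length + w.length) with h2 | h2
    · rw [List.getD_eq_getElem _ _ (by simp; omega),
        List.getD_eq_getElem _ _ (by omega), List.getElem_append_right h]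
    · rw [List.getD_eq_default _ _ (by simp; omega), List.getD_eq_default _ _ (by omega)]
      simp only [List.length_append]
      congr 1
      omega

lemma wcat_decomp {A : Type*} (z : ℕ → A) (m : ℕ) :
    wcat (List.ofFn fun i : Fin m => z i) (shft^[m] z) = z := by
  funext n
  unfold wcat
  rcases lt_or_ge n m with h | h
  · rw [List.getD_eq_getElem _ _ (by simpa using h)]
    simp
  · rw [List.getD_eq_default _ _ (by simpa using h), shft_iter]
    simp only [List.length_ofFn]
    congr 1
    omega

lemma klEq_symm {A : Type*} {X : Set (ℕ → A)} {k l : ℕ} {x y : ℕ → A}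
    (h : klEq X k l x y) : klEq X k l y x :=
  ⟨fun i hi => (h.1 i hi).symm, fun t ht => (h.2 t ht).symm⟩

lemma key13 {A : Type*} (X : Set (ℕ → A)) (v : List A) (F : Finset (List A))
    (r s : ℕ) (hrs : r ≤ s) (hvr : v.length ≤ r)
    (hms : max (F.sup List.length) v.length - v.length ≤ s - r)
    (x y : ℕ → A) (hy : y ∈ X) (hxy : klEq X r s x y) (hxC : x ∈ CFv X F v) :
    y ∈ CFv X F v := by
  obtain ⟨heq, hpast⟩ := hxy
  obtain ⟨x', hx'eq, hxX, hxf⟩ := hxC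
  set k := v.length with hk
  have hx' : x' = shft^[k] x := by
    funext n
    rw [shft_iter, hx'eq]
    unfold wcat
    rw [List.getD_eq_default _ _ (by omega)]
    congr 1
    omega
  refine ⟨shft^[k] y, ?_, hy, ?_⟩
  · funext n
    rcases lt_or_ge n k with h | h
    · have h1 := heq n (lt_of_lt_of_le h hvr)
      have h2 : x n = wcat v (shft^[k] y) n := by
        rw [hx'eq]
        unfold wcat
        rw [List.getD_eq_getElem _ _ h, List.getD_eq_getElem _ _ h]
      rw [← h1, h2]
    · unfold wcat
      rw [List.getD_eq_default _ _ (by omega), shft_iter]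
      congr 1
      omega
  · intro f hf
    have hshr : ∀ z : ℕ → A, shft^[r - k] (shft^[k] z) = shft^[r] z := by
      intro z
      rw [← Function.iterate_add_apply]
      congr 1
      omega
    set p : List A := List.ofFn (fun i : Fin (r - k) => x' i) with hp
    have hdx : wcat p (shft^[r] x) = x' := by
      rw [← hshr x, ← hx']
      exact wcat_decomp x' (r - k)
    have hpy : p = List.ofFn (fun i : Fin (r - k) => shft^[k] y i) := by
      rw [hp]
      congr 1
      funext i
      rw [hx', shft_iter, shft_iter]
      exact heq (i + k) (by omega)
    have hdy : wcat p (shft^[r] y) = shft^[k] y := by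
      rw [hpy, ← hshr y]
      exact wcat_decomp (shft^[k] y) (r - k)
    have hflen : f.length ≤ s - r + k := by
      have : f.length ≤ F.sup List.length := Finset.le_sup hf
      omega
    have hmem : (f ++ p) ∈ Pk X (f.length + (r - k)) (shft^[r] x) := by
      constructor
      · simp [hp]
      · rw [wcat_append_ev, hdx]
        exact hxf f hf
    have hmem2 := (hpast (f.length + (r - k)) (by omega)) ▸ hmem
    have := hmem2.2
    rw [wcat_append_ev, hdy] at this
    exact this

theorem stmt13 {A : Type*} [Fintype A] [TopologicalSpace A] [DiscreteTopology A]
    (X : Set (ℕ → A)) (hXcl : IsClosed X) (hXsh : ∀ x ∈ X, shft x ∈ X)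
    (v : List A) (F : Finset (List A)) :
    ∀ x ∈ X, ∀ r s : ℕ, r ≤ s → v.length ≤ r →
      max (F.sup List.length) v.length - v.length ≤ s - r →
      ({y ∈ X | klEq X r s x y} ⊆ CFv X F v ∨
        ∀ y ∈ X, klEq X r s x y → y ∉ CFv X F v) := by
  intro x hx r s hrs hvr hms
  by_cases hxC : x ∈ CFv X F v
  · left
    rintro y ⟨hy, hxy⟩
    exact key13 X v F r s hrs hvr hms x y hy hxy hxC
  · right
    intro y hy hxy hyC
    exact hxC (key13 X v F r s hrs hvr hms y x hx (klEq_symm hxy) hyC)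
end

section
/- For words v, w ∈ A*, with k = |v| and l = max{|w|,|v|}, the set C(w,v) is a finite disjoint union of equivalence classes of the relation ~_{(k,l)}: there is a finite set of representatives x₁,…,x_m of the l-past equivalence classes and F ⊆ {1,…,m} with C(w,v) = ⋃_{f∈F} (C(v) ∩ σ^{-k}([x_f]_l)), where [x]_l is the l-past equivalence class. -/
open Function

/-!
`C(w,v)` consists of the points `vx ∈ X` with `wx ∈ X`. Whether `wx ∈ X` depends only on the
`l`-past of `x` as soon as `|w| ≤ l`, and the `l`-past of `x` is a set of words of length at most
`l`, so there are only finitely many `l`-past classes. Choosing one representative `x_i ∈ X` per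
class, `C(w,v)` is the union, over those `i` with `w x_i ∈ X`, of the points of `C(v)` whose tail
after `|v|` letters lies in the class of `x_i`.
-/

lemma exists_fin_transversal {α β : Type*} (φ : α → β) {S : Set α} (hS : (φ '' S).Finite) :
    ∃ (m : ℕ) (xs : Fin m → α),
      (∀ i, xs i ∈ S) ∧ (∀ y ∈ S, ∃ i, φ y = φ (xs i)) ∧ Injective (φ ∘ xs) := by
  have : Finite (φ '' S) := hS
  let e : Fin (Nat.card (φ '' S)) ≃ φ '' S := (Finite.equivFin _).symm
  choose xs hxsS hxs using fun i => (e i).2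
  refine ⟨_, xs, hxsS, fun y hy => ⟨e.symm ⟨φ y, Set.mem_image_of_mem φ hy⟩, ?_⟩, ?_⟩
  · rw [hxs, e.apply_symm_apply]
  · intro i j hij
    simp only [comp_apply, hxs] at hij
    exact e.injective (Subtype.ext hij)

section Shift

variable {A : Type*}

lemma shft_iterate_apply (n : ℕ) (x : ℕ → A) (m : ℕ) : (shft^[n] x) m = x (m + n) := by
  induction n generalizing x with
  | zero => rfl
  | succ n ih => simp [ih, shft, Nat.add_assoc]

lemma shft_iterate_wcat (v : List A) (x : ℕ → A) : shft^[v.length] (wcat v x) = x := by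
  funext m
  simp [shft_iterate_apply, wcat]

lemma shft_iterate_mem {X : Set (ℕ → A)} (hXsh : ∀ x ∈ X, shft x ∈ X) (n : ℕ) {y : ℕ → A}
    (hy : y ∈ X) : shft^[n] y ∈ X := by
  induction n with
  | zero => exact hy
  | succ n ih => rw [iterate_succ_apply']; exact hXsh _ ih

end Shift

section Past

variable {A : Type*} {X : Set (ℕ → A)} {l : ℕ}

def pastSet (X : Set (ℕ → A)) (l : ℕ) (x : ℕ → A) : Set (List A) :=
  {μ | μ.length ≤ l ∧ wcat μ x ∈ X}

lemma pastEq.wcat_mem_iff {x y : ℕ → A} (h : pastEq X l x y) {μ : List A} (hμ : μ.length ≤ l) :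
    wcat μ x ∈ X ↔ wcat μ y ∈ X := by
  simpa [Pk] using Set.ext_iff.mp (h μ.length hμ) μ

lemma pastEq_iff_pastSet_eq {x y : ℕ → A} : pastEq X l x y ↔ pastSet X l x = pastSet X l y := by
  refine ⟨fun h => Set.ext fun μ => and_congr_right fun hμ => h.wcat_mem_iff hμ, fun h r hr => ?_⟩
  ext μ
  have := Set.ext_iff.mp h μ
  simp only [pastSet, Set.mem_ofPred_eq] at this
  simp only [Pk, Set.mem_ofPred_eq]
  constructor <;> rintro ⟨rfl, hμ⟩ <;> simp_all

lemma finite_range_pastSet [Finite A] (X : Set (ℕ → A)) (l : ℕ) :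
    (Set.range (pastSet X l)).Finite :=
  (List.finite_length_le A l).finite_subsets.subset <| by
    rintro _ ⟨x, rfl⟩ μ hμ
    exact hμ.1

lemma mem_Cmn_iff {w v : List A} {y : ℕ → A} :
    y ∈ Cmn X w v ↔ y ∈ Cyl X v ∧ wcat w (shft^[v.length] y) ∈ X := by
  constructor
  · rintro ⟨x, rfl, hyX, hwx⟩
    exact ⟨⟨hyX, x, rfl⟩, by rwa [shft_iterate_wcat]⟩
  · rintro ⟨⟨hyX, x, rfl⟩, hwx⟩
    exact ⟨x, rfl, hyX, by rwa [shft_iterate_wcat] at hwx⟩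

lemma Cmn_eq_iUnion_pastEq (hXsh : ∀ x ∈ X, shft x ∈ X) {w v : List A} (hl : w.length ≤ l)
    {ι : Type*} (xs : ι → ℕ → A) (hcover : ∀ y ∈ X, ∃ i, pastEq X l y (xs i)) :
    Cmn X w v = ⋃ i ∈ {i | wcat w (xs i) ∈ X},
      (Cyl X v ∩ (shft^[v.length]) ⁻¹' {y | y ∈ X ∧ pastEq X l y (xs i)}) := by
  ext y
  simp only [mem_Cmn_iff, Set.mem_iUnion, Set.mem_inter_iff, Set.mem_preimage, Set.mem_ofPred_eq,
    exists_prop]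
  constructor
  · rintro ⟨hy, hwy⟩
    have htail : shft^[v.length] y ∈ X := shft_iterate_mem hXsh _ hy.1
    obtain ⟨i, hi⟩ := hcover _ htail
    exact ⟨i, (hi.wcat_mem_iff hl).mp hwy, hy, htail, hi⟩
  · rintro ⟨i, hwi, hy, -, hi⟩
    exact ⟨hy, (hi.wcat_mem_iff hl).mpr hwi⟩

end Past

theorem stmt18_general {A : Type*} [Fintype A]
    (X : Set (ℕ → A)) (hXsh : ∀ x ∈ X, shft x ∈ X)
    (w v : List A) :
    ∃ (m : ℕ) (xs : Fin m → (ℕ → A)),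
      (∀ i, xs i ∈ X) ∧
      (∀ y ∈ X, ∃ i, pastEq X (max w.length v.length) y (xs i)) ∧
      (∀ i j, pastEq X (max w.length v.length) (xs i) (xs j) → i = j) ∧
      ∃ Fs : Finset (Fin m),
        Cmn X w v = ⋃ f ∈ Fs,
          (Cyl X v ∩
            (shft^[v.length]) ⁻¹'
              {y | y ∈ X ∧ pastEq X (max w.length v.length) y (xs f)}) := by
  classical
  set l := max w.length v.length
  obtain ⟨m, xs, hxsX, hrep, hinj⟩ := exists_fin_transversal (pastSet X l)
    ((finite_range_pastSet X l).subset (Set.image_subset_range _ X))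
  have hcover : ∀ y ∈ X, ∃ i, pastEq X l y (xs i) := fun y hy => by
    simpa only [pastEq_iff_pastSet_eq] using hrep y hy
  refine ⟨m, xs, hxsX, hcover, fun i j hij => hinj (pastEq_iff_pastSet_eq.mp hij),
    Finset.univ.filter fun i => wcat w (xs i) ∈ X, ?_⟩
  rw [Cmn_eq_iUnion_pastEq hXsh (le_max_left _ _) xs hcover]
  simp [l]

theorem stmt18 {A : Type*} [Fintype A] [TopologicalSpace A] [DiscreteTopology A]
    (X : Set (ℕ → A)) (hXcl : IsClosed X) (hXsh : ∀ x ∈ X, shft x ∈ X)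
    (w v : List A) :
    ∃ (m : ℕ) (xs : Fin m → (ℕ → A)),
      (∀ i, xs i ∈ X) ∧
      (∀ y ∈ X, ∃ i, pastEq X (max w.length v.length) y (xs i)) ∧
      (∀ i j, pastEq X (max w.length v.length) (xs i) (xs j) → i = j) ∧
      ∃ Fs : Finset (Fin m),
        Cmn X w v = ⋃ f ∈ Fs,
          (Cyl X v ∩
            (shft^[v.length]) ⁻¹'
              {y | y ∈ X ∧ pastEq X (max w.length v.length) y (xs f)}) :=
  stmt18_general X hXsh w v
end
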